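/- Let H be a labelled multihypergraph on a finite vertex set V with all hyperedges of size at least 2, let F = (F_e) be a tree assignment of H with labelled union G = ⨄_e F_e, and let 𝒯 = (T_0, …, T_{k−1}) be a k-tree decomposition of G. For every partition 𝒫 of V, w_H(𝒫) − k(|𝒫| − 1) = B_𝒯(𝒫) − Λ_F(𝒫), where Λ_F(𝒫) = Σ_{e∈E(H)} (cr_{F_e}(𝒫) − p_𝒫(e) + 1) and B_𝒯(𝒫) = Σ_{i=0}^{k−1} cr_{T_i}(𝒫) − k(|𝒫| − 1). Moreover Λ_F(𝒫) ≥ 0 and B_𝒯(𝒫) ≥ 0; consequently H is k-weakly-partition-connected if and only if Λ_F(𝒫) ≤ B_𝒯(𝒫) for every partition 𝒫 of V. -/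

import Mathlib

open scoped Classical
noncomputable section

variable {W : Type*}

/-- `A` is the edge set of a tree with vertex set `e`: no loops, all endpoints in `e`,
acyclic, and any two vertices of `e` are connected. -/
def IsTreeOn (e : Finset W) (A : Finset (Sym2 W)) : Prop :=
  (∀ s ∈ A, ¬ s.IsDiag) ∧
  (∀ s ∈ A, ∀ v ∈ s, v ∈ e) ∧
  (SimpleGraph.fromEdgeSet (A : Set (Sym2 W))).IsAcyclic ∧
  (∀ x ∈ e, ∀ y ∈ e, (SimpleGraph.fromEdgeSet (A : Set (Sym2 W))).Reachable x y)

/-- Number of blocks of the partition `P` that meet `e`. -/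
def pblocks [DecidableEq W] {U : Finset W} (P : Finpartition U) (e : Finset W) : ℕ :=
  (P.parts.filter fun B => (B ∩ e).Nonempty).card

/-- Number of edges in `A` whose two endpoints lie in distinct blocks of `P`. -/
def crossEdges [DecidableEq W] {U : Finset W} (P : Finpartition U) (A : Finset (Sym2 W)) : ℕ :=
  (A.filter fun s => ∀ B ∈ P.parts, ¬ (∀ v ∈ s, v ∈ B)).card

/-- `k`-weak partition connectivity of the multihypergraph with vertex set `U`
and hyperedge family `E`. -/
def WeaklyPC [DecidableEq W] {ι : Type*} [Fintype ι] (U : Finset W)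
    (E : ι → Finset W) (k : ℕ) : Prop :=
  ∀ P : Finpartition U, k * (P.parts.card - 1) ≤ ∑ i, (pblocks P (E i) - 1)

/-- The labelled edge set of the tree assignment `F`: each graph edge is tagged by
the hyperedge occurrence producing it. -/
def LEdges [DecidableEq W] {ι : Type*} [Fintype ι] [DecidableEq ι]
    (F : ι → Finset (Sym2 W)) : Finset (ι × Sym2 W) :=
  Finset.univ.biUnion fun i => (F i).image fun s => (i, s)

/-- An (ordered) `k`-tree decomposition of the labelled union of the tree assignment `F`:
each labelled edge gets a layer, and the labelled edges of each layer are (bijectively)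
the edge set of a spanning tree of `U`. -/
structure KTreeDecomp [DecidableEq W] {ι : Type*} [Fintype ι] [DecidableEq ι]
    (U : Finset W) (F : ι → Finset (Sym2 W)) (k : ℕ) where
  layer : ι × Sym2 W → Fin k
  tree : Fin k → Finset (Sym2 W)
  tree_isTree : ∀ j, IsTreeOn U (tree j)
  tree_eq : ∀ j, tree j = ((LEdges F).filter fun p => layer p = j).image Prod.snd
  layer_inj : ∀ p ∈ LEdges F, ∀ q ∈ LEdges F, layer p = layer q → p.2 = q.2 → p = q

/-- The signature of a `k`-tree decomposition: `sig D e = ∑ i, i • |E(T_i) ∩ E(F_e)|`. -/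
def sig [DecidableEq W] {ι : Type*} [Fintype ι] [DecidableEq ι] {U : Finset W}
    {F : ι → Finset (Sym2 W)} {k : ℕ} (D : KTreeDecomp U F k) (i : ι) : ℕ :=
  ∑ j : Fin k, j.1 * ((F i).filter fun s => D.layer (i, s) = j).card

/-- `H = (U, E)` has a `k`-distinguishable tree assignment. -/
def Distinguishable [DecidableEq W] {ι : Type*} [Fintype ι] [DecidableEq ι]
    (U : Finset W) (E : ι → Finset W) (k : ℕ) : Prop :=
  ∃ F : ι → Finset (Sym2 W), (∀ i, IsTreeOn (E i) (F i)) ∧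
    ∃ D : KTreeDecomp U F k, ∀ D' : KTreeDecomp U F k,
      (∀ i, sig D' i = sig D i) → ∀ p ∈ LEdges F, D'.layer p = D.layer p

/-- The star on `e` centered at `c`. -/
def starOn [DecidableEq W] (e : Finset W) (c : W) : Finset (Sym2 W) :=
  (e.erase c).image fun u => s(c, u)

/-!
Each layer of a tree decomposition is a set of labelled edges of `G = ⨄ F_e` and the layers
partition them, so `∑ j, cr_{T_j}(𝒫) = ∑ e, cr_{F_e}(𝒫)`; the identity is then a rearrangement.
Both slacks are nonnegative because a connected edge set on a vertex set `e` crosses `𝒫` at least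
`p_𝒫(e) - 1` times: contracting every block to a point, its crossing edges form a connected
graph on the `p_𝒫(e)` blocks meeting `e`, and a connected graph on `n` vertices has at least
`n - 1` edges. The spanning trees `T_j` are the case `e = V`.
-/

open Finset SimpleGraph

theorem card_le_card_add_one_of_forall_reachable {S : Finset W} {A : Finset (Sym2 W)}
    (hA : ∀ s ∈ A, ∀ v ∈ s, v ∈ S)
    (hS : ∀ x ∈ S, ∀ y ∈ S, (fromEdgeSet (A : Set (Sym2 W))).Reachable x y) :
    #S ≤ #A + 1 := by
  set G := fromEdgeSet (A : Set (Sym2 W))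
  obtain rfl | ⟨x₀, hx₀⟩ := S.eq_empty_or_nonempty
  · simp
  have hconn : (G.induce (S : Set W)).Connected := by
    refine (connected_iff _).2 ⟨fun x y => ?_, ⟨⟨x₀, hx₀⟩⟩⟩
    obtain ⟨w⟩ := hS x x.2 y y.2
    have hw : ∀ v ∈ w.support, v ∈ (S : Set W) := by
      intro v hv
      obtain rfl | ⟨s, hs, hvs⟩ := Walk.mem_support_iff_exists_mem_edges.1 hv
      · exact y.2
      · exact hA s (edgeSet_fromEdgeSet _ ▸ w.edges_subset_edgeSet hs).1 v hvs
    exact ⟨w.induce _ hw⟩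
  have hedges : Nat.card (G.induce (S : Set W)).edgeSet ≤ #A :=
    calc Nat.card (G.induce (S : Set W)).edgeSet
        ≤ Nat.card G.edgeSet :=
          Nat.card_le_card_of_injective _ (Hom.mapEdgeSet.injective (Embedding.induce _).toHom
            Subtype.val_injective)
      _ ≤ Nat.card (A : Set (Sym2 W)) :=
          Nat.card_mono A.finite_toSet (by simp [G, edgeSet_fromEdgeSet])
      _ = #A := Nat.card_coe_set_eq _ ▸ Set.ncard_coe_finset A
  calc #S = Nat.card (S : Set W) := by simp
    _ ≤ Nat.card (G.induce (S : Set W)).edgeSet + 1 := hconn.card_vert_le_card_edgeSet_add_one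
    _ ≤ #A + 1 := by omega

theorem pblocks_eq_card_image_part [DecidableEq W] {U : Finset W} (P : Finpartition U)
    {e : Finset W} (he : e ⊆ U) : pblocks P e = #(e.image P.part) := by
  unfold pblocks
  congr 1
  ext B
  simp only [mem_filter, mem_image]
  constructor
  · rintro ⟨hB, x, hx⟩
    rw [mem_inter] at hx
    exact ⟨x, hx.2, P.part_eq_of_mem hB hx.1⟩
  · rintro ⟨x, hx, rfl⟩
    exact ⟨P.part_mem.2 (he hx), x, mem_inter.2 ⟨P.mem_part (he hx), hx⟩⟩

theorem pblocks_le_crossEdges_add_one [DecidableEq W] {U : Finset W} (P : Finpartition U)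
    {e : Finset W} (he : e ⊆ U) {A : Finset (Sym2 W)}
    (hend : ∀ s ∈ A, ∀ v ∈ s, v ∈ e)
    (hconn : ∀ x ∈ e, ∀ y ∈ e, (fromEdgeSet (A : Set (Sym2 W))).Reachable x y) :
    pblocks P e ≤ crossEdges P A + 1 := by
  set cross := A.filter fun s => ∀ B ∈ P.parts, ¬ (∀ v ∈ s, v ∈ B)
  set A' := cross.image (Sym2.map P.part)
  have hcross : ∀ a b, s(a, b) ∈ A → P.part a ≠ P.part b → s(a, b) ∈ cross := by
    refine fun a b hab hne => mem_filter.2 ⟨hab, fun B hB hsB => hne ?_⟩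
    rw [P.part_eq_of_mem hB (hsB a (by simp)), P.part_eq_of_mem hB (hsB b (by simp))]
  have hreach : ∀ x ∈ e, ∀ y ∈ e,
      (fromEdgeSet (A' : Set (Sym2 (Finset W)))).Reachable (P.part x) (P.part y) := by
    intro x hx y hy
    rw [reachable_iff_reflTransGen]
    refine Relation.ReflTransGen.lift' P.part (fun a b hab => ?_) _ _
      ((reachable_iff_reflTransGen _ _).1 (hconn x hx y hy))
    rw [fromEdgeSet_adj, mem_coe] at hab
    by_cases h : P.part a = P.part b
    · rw [Function.onFun, h]
    · exact .single ⟨mem_image.2 ⟨_, hcross a b hab.1 h, Sym2.map_mk _ _ _⟩, h⟩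
  have hend' : ∀ s ∈ A', ∀ v ∈ s, v ∈ e.image P.part := by
    rintro _ hs' v hv
    obtain ⟨s, hs, rfl⟩ := mem_image.1 hs'
    obtain ⟨u, hu, rfl⟩ := Sym2.mem_map.1 hv
    exact mem_image.2 ⟨u, hend s (mem_filter.1 hs).1 u hu, rfl⟩
  calc pblocks P e = #(e.image P.part) := pblocks_eq_card_image_part P he
    _ ≤ #A' + 1 := card_le_card_add_one_of_forall_reachable hend' (by simpa using hreach)
    _ ≤ crossEdges P A + 1 := by gcongr; exact card_image_le

theorem pblocks_self [DecidableEq W] {U : Finset W} (P : Finpartition U) :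
    pblocks P U = #P.parts := by
  unfold pblocks
  rw [filter_true_of_mem fun B hB => by
    simpa [inter_eq_left.2 (P.le hB)] using P.nonempty_of_mem_parts hB]

section TreeDecomposition

variable [DecidableEq W] {ι : Type*} [Fintype ι] [DecidableEq ι] {F : ι → Finset (Sym2 W)}

theorem card_filter_lEdges (F : ι → Finset (Sym2 W)) (q : Sym2 W → Prop) [DecidablePred q] :
    #((LEdges F).filter fun p => q p.2) = ∑ i, #((F i).filter q) := by
  have hinj : ∀ i : ι, Function.Injective fun s : Sym2 W => (i, s) := fun i _ _ h =>
    (Prod.mk.inj h).2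
  rw [LEdges, filter_biUnion, card_biUnion]
  · refine sum_congr rfl fun i _ => ?_
    rw [filter_image, card_image_of_injective _ (hinj i)]
  · intro i _ i' _ hii'
    simp only [Function.onFun, Finset.disjoint_left, mem_filter, mem_image]
    rintro _ ⟨⟨s, _, rfl⟩, _⟩ ⟨⟨s', _, h⟩, _⟩
    exact hii' (Prod.mk.inj h).1.symm

namespace KTreeDecomp

variable {U : Finset W} {k : ℕ} (D : KTreeDecomp U F k)

theorem card_filter_tree (j : Fin k) (q : Sym2 W → Prop) [DecidablePred q] :
    #((D.tree j).filter q) = #((LEdges F).filter fun p => D.layer p = j ∧ q p.2) := by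
  rw [D.tree_eq j, filter_image, card_image_of_injOn, filter_filter]
  intro p hp p' hp' hpp'
  simp only [filter_filter, coe_filter, Set.mem_ofPred_eq] at hp hp'
  exact D.layer_inj p hp.1 p' hp'.1 (hp.2.1.trans hp'.2.1.symm) hpp'

theorem sum_card_filter_tree (q : Sym2 W → Prop) [DecidablePred q] :
    ∑ j, #((D.tree j).filter q) = ∑ i, #((F i).filter q) := by
  rw [← card_filter_lEdges F, card_eq_sum_card_fiberwise (f := D.layer) (t := univ)
    fun _ _ => mem_univ _]
  refine sum_congr rfl fun j _ => ?_
  rw [D.card_filter_tree, filter_filter]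
  simp only [and_comm]

theorem sum_crossEdges_tree {U' : Finset W} (P : Finpartition U') :
    ∑ j, crossEdges P (D.tree j) = ∑ i, crossEdges P (F i) :=
  D.sum_card_filter_tree _

theorem mul_card_parts_sub_one_le_sum_crossEdges (P : Finpartition U) :
    (k : ℤ) * ((#P.parts : ℤ) - 1) ≤ ∑ j, (crossEdges P (D.tree j) : ℤ) := by
  have hT : ∀ j, #P.parts ≤ crossEdges P (D.tree j) + 1 := fun j =>
    pblocks_self P ▸ pblocks_le_crossEdges_add_one P subset_rfl
      (D.tree_isTree j).2.1 (D.tree_isTree j).2.2.2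
  calc (k : ℤ) * ((#P.parts : ℤ) - 1) = ∑ _j : Fin k, ((#P.parts : ℤ) - 1) := by
        rw [sum_const, card_univ, Fintype.card_fin, nsmul_eq_mul]
    _ ≤ ∑ j, (crossEdges P (D.tree j) : ℤ) := sum_le_sum fun j _ => by have := hT j; omega

end KTreeDecomp

end TreeDecomposition

theorem weaklyPC_iff_forall_int_le [DecidableEq W] {ι : Type*} [Fintype ι] {U : Finset W}
    (hU : U.Nonempty) {E : ι → Finset W} (hE : ∀ i, (E i).Nonempty) (hEU : ∀ i, E i ⊆ U)
    (k : ℕ) :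
    WeaklyPC U E k ↔ ∀ P : Finpartition U,
      (k : ℤ) * ((#P.parts : ℤ) - 1) ≤ ∑ i, ((pblocks P (E i) : ℤ) - 1) := by
  refine forall_congr' fun P => ?_
  have hparts : 1 ≤ #P.parts := card_pos.2 (P.parts_nonempty hU.ne_empty)
  have hblocks : ∀ i, 1 ≤ pblocks P (E i) := fun i => by
    rw [pblocks_eq_card_image_part P (hEU i)]
    exact card_pos.2 ((hE i).image _)
  rw [← Nat.cast_le (α := ℤ)]
  push_cast [Nat.cast_sub hparts, Nat.cast_sub (hblocks _)]
  rfl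

/-- exact slack identity.  For a tree assignment `F` of `H` and a
`k`-tree decomposition `𝒯 = D` of its labelled union, for every partition `𝒫`:
`w_H(𝒫) - k(|𝒫| - 1) = B_𝒯(𝒫) - Λ_F(𝒫)` with `Λ_F(𝒫) ≥ 0` and `B_𝒯(𝒫) ≥ 0`;
consequently `H` is `k`-weakly-partition-connected iff `Λ_F(𝒫) ≤ B_𝒯(𝒫)` for all `𝒫`. -/
theorem stmt17 {V : Type*} [Fintype V] [DecidableEq V] {ι : Type*} [Fintype ι]
    [DecidableEq ι] (hV : 2 ≤ Fintype.card V)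
    (E : ι → Finset V) (hE : ∀ i, 2 ≤ (E i).card)
    (F : ι → Finset (Sym2 V)) (hF : ∀ i, IsTreeOn (E i) (F i))
    (k : ℕ) (D : KTreeDecomp (Finset.univ : Finset V) F k) :
    (∀ P : Finpartition (Finset.univ : Finset V),
      (∑ i, ((pblocks P (E i) : ℤ) - 1)) - k * ((P.parts.card : ℤ) - 1)
        = ((∑ j : Fin k, (crossEdges P (D.tree j) : ℤ)) - k * ((P.parts.card : ℤ) - 1))
          - ∑ i, ((crossEdges P (F i) : ℤ) - (pblocks P (E i) : ℤ) + 1)) ∧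
    (∀ P : Finpartition (Finset.univ : Finset V),
      0 ≤ ∑ i, ((crossEdges P (F i) : ℤ) - (pblocks P (E i) : ℤ) + 1)) ∧
    (∀ P : Finpartition (Finset.univ : Finset V),
      0 ≤ (∑ j : Fin k, (crossEdges P (D.tree j) : ℤ)) - k * ((P.parts.card : ℤ) - 1)) ∧
    (WeaklyPC (Finset.univ : Finset V) E k ↔
      ∀ P : Finpartition (Finset.univ : Finset V),
        (∑ i, ((crossEdges P (F i) : ℤ) - (pblocks P (E i) : ℤ) + 1))
          ≤ (∑ j : Fin k, (crossEdges P (D.tree j) : ℤ))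
            - k * ((P.parts.card : ℤ) - 1)) := by
  have identity : ∀ P : Finpartition (univ : Finset V),
      (∑ i, ((pblocks P (E i) : ℤ) - 1)) - k * ((#P.parts : ℤ) - 1)
        = ((∑ j : Fin k, (crossEdges P (D.tree j) : ℤ)) - k * ((#P.parts : ℤ) - 1))
          - ∑ i, ((crossEdges P (F i) : ℤ) - (pblocks P (E i) : ℤ) + 1) := fun P => by
    have hcross : ∑ j, (crossEdges P (D.tree j) : ℤ) = ∑ i, (crossEdges P (F i) : ℤ) := by
      exact_mod_cast D.sum_crossEdges_tree P
    simp only [hcross, sum_add_distrib, sum_sub_distrib]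
    ring
  have hΛ : ∀ P : Finpartition (univ : Finset V),
      0 ≤ ∑ i, ((crossEdges P (F i) : ℤ) - (pblocks P (E i) : ℤ) + 1) := fun P =>
    sum_nonneg fun i _ => by
      have := pblocks_le_crossEdges_add_one P (subset_univ _) (hF i).2.1 (hF i).2.2.2
      omega
  have hne : Nonempty V := Fintype.card_pos_iff.1 (by omega)
  refine ⟨identity, hΛ, fun P => sub_nonneg.2 (D.mul_card_parts_sub_one_le_sum_crossEdges P), ?_⟩
  rw [weaklyPC_iff_forall_int_le univ_nonempty (fun i => card_pos.1 (by have := hE i; omega))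
    (fun i => subset_univ _)]
  exact forall_congr' fun P => by have := identity P; constructor <;> intro <;> linarith

end
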